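/- Let k > 1 and let A = (a,b,1) be a point of the affine plane with a ≤ -1/(k-1) and b ≤ -1/(k-1). Then the quadratic form G_A(x,y,z) = -a x² - b y² - (1-a-b)(z-x-y)² + k a y(z-x-y) + k b x(z-x-y) + k(1-a-b)xy is strictly positive at every point of the unbounded affine branch of the Hesse cubic's Hessian lying in the region {x>0, y>0, x+y>1}. -/

import Mathlib

/-- The Hessian determinant `det(∂²F_k/∂xᵢ∂xⱼ)` of the translated Hesse cubic
`F_k(x,y,z) = -x³ - y³ - (z-x-y)³ + 3kxy(z-x-y)`, with the second partial
derivatives written out explicitly (here `w = z - x - y`). -/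
def hesseFHessianDet (k x y z : ℝ) : ℝ :=
  Matrix.det
    !![-6 * x - 6 * (z - x - y) - 6 * k * y,
       -6 * (z - x - y) + 3 * k * (z - x - y) - 3 * k * y - 3 * k * x,
       6 * (z - x - y) + 3 * k * y;
       -6 * (z - x - y) + 3 * k * (z - x - y) - 3 * k * y - 3 * k * x,
       -6 * y - 6 * (z - x - y) - 6 * k * x,
       6 * (z - x - y) + 3 * k * x;
       6 * (z - x - y) + 3 * k * y,
       6 * (z - x - y) + 3 * k * x,
       -6 * (z - x - y)]

/-- The second polar `G_A(D) = A·D²` of `F_k` with respect to `A = (a,b,1)`. -/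
def secondPolar (k a b x y z : ℝ) : ℝ :=
  -a * x ^ 2 - b * y ^ 2 - (1 - a - b) * (z - x - y) ^ 2 +
    k * a * y * (z - x - y) + k * b * x * (z - x - y) + k * (1 - a - b) * x * y

/-!
`G_A(x, y, 1)` is affine in `(a, b)`. Writing `s = x + y - 1`, the coefficients of `a` and `b`
are `-(x + s)(1 + (k-1)y)` and `-(y + s)(1 + (k-1)x)`, both negative on the region, and at the
corner `a = b = -1/(k-1)` the form equals `((k-1)(k+2)xy + (k+2)s + 1)/(k-1) > 0`.
-/

lemma secondPolar_one_eq_corner_add (k a b x y : ℝ) (hk : k ≠ 1) :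
    secondPolar k a b x y 1 =
      (-1 / (k - 1) - a) * ((x + (x + y - 1)) * (1 + (k - 1) * y)) +
      (-1 / (k - 1) - b) * ((y + (x + y - 1)) * (1 + (k - 1) * x)) +
      1 / (k - 1) * ((k - 1) * (k + 2) * (x * y) + (k + 2) * (x + y - 1) + 1) := by
  have : k - 1 ≠ 0 := sub_ne_zero.mpr hk
  unfold secondPolar
  field_simp
  ring

lemma secondPolar_one_pos {k a b x y : ℝ} (hk : 1 < k)
    (ha : a ≤ -1 / (k - 1)) (hb : b ≤ -1 / (k - 1))
    (hx : 0 < x) (hy : 0 < y) (hxy : 1 < x + y) :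
    0 < secondPolar k a b x y 1 := by
  rw [secondPolar_one_eq_corner_add k a b x y hk.ne']
  have hk₀ : 0 < k - 1 := sub_pos.mpr hk
  have ha₀ : 0 ≤ -1 / (k - 1) - a := sub_nonneg.mpr ha
  have hb₀ : 0 ≤ -1 / (k - 1) - b := sub_nonneg.mpr hb
  have hs : 0 < x + y - 1 := sub_pos.mpr hxy
  have hwa : 0 < (x + (x + y - 1)) * (1 + (k - 1) * y) := by positivity
  have hwb : 0 < (y + (x + y - 1)) * (1 + (k - 1) * x) := by positivity
  have hcorner : 0 < (k - 1) * (k + 2) * (x * y) + (k + 2) * (x + y - 1) + 1 := by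
    have : 0 < k + 2 := by linarith
    positivity
  positivity

/-- For `k > 1` and `A = (a,b,1)` with `a ≤ -1/(k-1)` and `b ≤ -1/(k-1)`, the
quadratic form `G_A` is strictly positive at every point of the unbounded affine
branch of the Hessian curve lying in the region `{x>0, y>0, x+y>1}`. -/
theorem stmt_15 (k a b : ℝ) (hk : 1 < k)
    (ha : a ≤ -1 / (k - 1)) (hb : b ≤ -1 / (k - 1)) :
    ∀ x y : ℝ, hesseFHessianDet k x y 1 = 0 → 0 < x → 0 < y → 1 < x + y →
      0 < secondPolar k a b x y 1 :=
  fun _ _ _ hx hy hxy => secondPolar_one_pos hk ha hb hx hy hxy
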